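/- Vertical cut decomposition: the identity channel on a single qubit satisfies ρ ↦ ρ = Σ_{k=1}^{8} d_k tr(O_k ρ) ρ_k for every 2×2 Hermitian matrix ρ, where O_k = σ_{⌊(k−1)/2⌋} (the identity and Pauli matrices, each appearing twice), ρ₁ = |0⟩⟨0|, ρ₂ = |1⟩⟨1|, ρ_k = (𝟙 − (−1)^k O_k)/2 for k > 2, and d_k = −1/2 for k ∈ {4,6,8} and d_k = 1/2 otherwise. -/
import Mathlib


open Matrix

/-- The Pauli matrices `σ₀ = 𝟙, σ₁ = X, σ₂ = Y, σ₃ = Z`. -/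
noncomputable def sigmaMat : Fin 4 → Matrix (Fin 2) (Fin 2) ℂ :=
  ![1, !![0, 1; 1, 0], !![0, -Complex.I; Complex.I, 0], !![1, 0; 0, -1]]

/-- `O_k = σ_{⌊(k−1)/2⌋}`, indexed here by `k : Fin 8` standing for `k+1 ∈ {1,…,8}`. -/
noncomputable def Ocut (k : Fin 8) : Matrix (Fin 2) (Fin 2) ℂ :=
  sigmaMat ⟨k.val / 2, by omega⟩

/-- `ρ₁ = |0⟩⟨0|`, `ρ₂ = |1⟩⟨1|`, `ρ_k = (𝟙 − (−1)^k O_k)/2` for `k > 2`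
(with `k : Fin 8` standing for `k+1`). -/
noncomputable def rhoCut (k : Fin 8) : Matrix (Fin 2) (Fin 2) ℂ :=
  if k.val = 0 then !![1, 0; 0, 0]
  else if k.val = 1 then !![0, 0; 0, 1]
  else (2 : ℂ)⁻¹ • ((1 : Matrix (Fin 2) (Fin 2) ℂ) - ((-1 : ℂ) ^ (k.val + 1)) • Ocut k)

/-- `d_k = −1/2` for `k ∈ {4,6,8}`, i.e. `k.val ∈ {3,5,7}`, and `1/2` otherwise. -/
noncomputable def dCut (k : Fin 8) : ℝ :=
  if k.val = 3 ∨ k.val = 5 ∨ k.val = 7 then -(1 / 2) else 1 / 2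

lemma O0 : Ocut 0 = 1 := rfl
lemma R0 : rhoCut 0 = !![1,0;0,0] := by
  ext i j
  fin_cases i <;> fin_cases j <;>
    simp [rhoCut, O0, Matrix.one_apply, show (((0:Fin 8)).val) = 0 from rfl] <;> norm_num [Complex.ext_iff]
lemma D0 : dCut 0 = 1/2 := by simp [dCut, show (((0:Fin 8)).val) = 0 from rfl]
lemma O1 : Ocut 1 = 1 := rfl
lemma R1 : rhoCut 1 = !![0,0;0,1] := by
  ext i j
  fin_cases i <;> fin_cases j <;>
    simp [rhoCut, O1, Matrix.one_apply, show (((1:Fin 8)).val) = 1 from rfl] <;> norm_num [Complex.ext_iff]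
lemma D1 : dCut 1 = 1/2 := by simp [dCut, show (((1:Fin 8)).val) = 1 from rfl]
lemma O2 : Ocut 2 = !![0,1;1,0] := rfl
lemma R2 : rhoCut 2 = !![2⁻¹,2⁻¹;2⁻¹,2⁻¹] := by
  ext i j
  fin_cases i <;> fin_cases j <;>
    simp [rhoCut, O2, Matrix.one_apply, show (((2:Fin 8)).val) = 2 from rfl] <;> norm_num [Complex.ext_iff]
lemma D2 : dCut 2 = 1/2 := by simp [dCut, show (((2:Fin 8)).val) = 2 from rfl]
lemma O3 : Ocut 3 = !![0,1;1,0] := rfl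
lemma R3 : rhoCut 3 = !![2⁻¹,-2⁻¹;-2⁻¹,2⁻¹] := by
  ext i j
  fin_cases i <;> fin_cases j <;>
    simp [rhoCut, O3, Matrix.one_apply, show (((3:Fin 8)).val) = 3 from rfl] <;> norm_num [Complex.ext_iff]
lemma D3 : dCut 3 = -(1/2) := by simp [dCut, show (((3:Fin 8)).val) = 3 from rfl]
lemma O4 : Ocut 4 = !![0,-Complex.I;Complex.I,0] := rfl
lemma R4 : rhoCut 4 = !![2⁻¹,-Complex.I/2;Complex.I/2,2⁻¹] := by
  ext i j
  fin_cases i <;> fin_cases j <;>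
    simp [rhoCut, O4, Matrix.one_apply, show (((4:Fin 8)).val) = 4 from rfl] <;> norm_num [Complex.ext_iff]
lemma D4 : dCut 4 = 1/2 := by simp [dCut, show (((4:Fin 8)).val) = 4 from rfl]
lemma O5 : Ocut 5 = !![0,-Complex.I;Complex.I,0] := rfl
lemma R5 : rhoCut 5 = !![2⁻¹,Complex.I/2;-Complex.I/2,2⁻¹] := by
  ext i j
  fin_cases i <;> fin_cases j <;>
    simp [rhoCut, O5, Matrix.one_apply, show (((5:Fin 8)).val) = 5 from rfl] <;> norm_num [Complex.ext_iff]
lemma D5 : dCut 5 = -(1/2) := by simp [dCut, show (((5:Fin 8)).val) = 5 from rfl]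
lemma O6 : Ocut 6 = !![1,0;0,-1] := rfl
lemma R6 : rhoCut 6 = !![1,0;0,0] := by
  ext i j
  fin_cases i <;> fin_cases j <;>
    simp [rhoCut, O6, Matrix.one_apply, show (((6:Fin 8)).val) = 6 from rfl] <;> norm_num [Complex.ext_iff]
lemma D6 : dCut 6 = 1/2 := by simp [dCut, show (((6:Fin 8)).val) = 6 from rfl]
lemma O7 : Ocut 7 = !![1,0;0,-1] := rfl
lemma R7 : rhoCut 7 = !![0,0;0,1] := by
  ext i j
  fin_cases i <;> fin_cases j <;>
    simp [rhoCut, O7, Matrix.one_apply, show (((7:Fin 8)).val) = 7 from rfl] <;> norm_num [Complex.ext_iff]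
lemma D7 : dCut 7 = -(1/2) := by simp [dCut, show (((7:Fin 8)).val) = 7 from rfl]

/-- Vertical cut decomposition of the single-qubit identity channel:
`ρ = Σ_{k=1}^{8} d_k tr(O_k ρ) ρ_k` for every Hermitian `ρ`. -/
theorem vertical_cut_decomposition (ρ : Matrix (Fin 2) (Fin 2) ℂ) (hρ : ρ.IsHermitian) :
    ρ = ∑ k : Fin 8, (dCut k : ℂ) • ((Ocut k * ρ).trace • rhoCut k) := by
  simp only [Fin.sum_univ_eight, O0, O1, O2, O3, O4, O5, O6, O7,
    R0, R1, R2, R3, R4, R5, R6, R7, D0, D1, D2, D3, D4, D5, D6, D7, trace_fin_two]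
  ext i j
  fin_cases i <;> fin_cases j <;>
    simp [Matrix.mul_apply, Fin.sum_univ_two] <;> ring_nf <;> simp [Complex.I_sq] <;> ring
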